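/- For every integer n ≥ 3, the zero forcing number of the line graph of the wheel graph W_{1,n} equals n + 1: Z(L(W_{1,n})) = n + 1. -/

import Mathlib

open SimpleGraph

variable {V : Type*}

/-- `W` is a resolving set of `G`: every pair of distinct vertices is resolved
by some vertex of `W` via graph distance. -/
def IsResolvingSet (G : SimpleGraph V) (W : Set V) : Prop :=
  ∀ u v : V, u ≠ v → ∃ w ∈ W, G.dist u w ≠ G.dist v w

/-- The metric dimension of `G`: minimum cardinality of a resolving set. -/
noncomputable def metricDim (G : SimpleGraph V) : ℕ :=
  sInf {k | ∃ W : Set V, W.ncard = k ∧ IsResolvingSet G W}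

/-- One global application of the zero-forcing color-change rule:
a black vertex `u` forces its unique white neighbor to become black. -/
def zfStep (G : SimpleGraph V) (S : Set V) : Set V :=
  S ∪ {v | ∃ u ∈ S, G.Adj u v ∧ ∀ w, G.Adj u w → w ∉ S → w = v}

/-- `S` is a zero forcing set of `G` if iterating the color-change rule
starting from `S` eventually turns all vertices black. -/
def IsZeroForcingSet (G : SimpleGraph V) (S : Set V) : Prop :=
  ∃ m : ℕ, (zfStep G)^[m] S = Set.univ

/-- The zero forcing number of `G`: minimum cardinality of a zero forcing set. -/
noncomputable def zeroForcingNum (G : SimpleGraph V) : ℕ :=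
  sInf {k | ∃ S : Set V, S.ncard = k ∧ IsZeroForcingSet G S}

/-- The wheel graph `W_{1,n} = C_n + K_1`: hub `none` joined to the cycle `C_n`
on vertices `some i`, `i : Fin n`. -/
def wheelGraph (n : ℕ) : SimpleGraph (Option (Fin n)) :=
  SimpleGraph.fromRel (fun u v =>
    match u, v with
    | none, some _ => True
    | some i, some j => ((i : ℕ) : ZMod n) + 1 = ((j : ℕ) : ZMod n)
    | _, _ => False)

/-- The bouquet of `n` circles of lengths `k 0 + 1, …, k (n-1) + 1`: the cut
vertex is `none`; the `i`-th circle consists of `none` together with the vertices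
`some ⟨i, j⟩`, `j : Fin (k i)`, in cyclic order. -/
def bouquet (n : ℕ) (k : Fin n → ℕ) : SimpleGraph (Option (Σ i : Fin n, Fin (k i))) :=
  SimpleGraph.fromRel (fun u v =>
    match u, v with
    | none, some a => (a.2 : ℕ) = 0 ∨ (a.2 : ℕ) = k a.1 - 1
    | some a, some b => a.1 = b.1 ∧ ((b.2 : ℕ) = (a.2 : ℕ) + 1)
    | _, _ => False)

/-- The path cover number of `G`: the minimum number of vertex-disjoint induced
paths covering all the vertices of `G`. -/
noncomputable def pathCoverNum (G : SimpleGraph V) : ℕ :=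
  sInf {m | ∃ f : V → Fin m, ∀ i : Fin m,
    ∃ k, 1 ≤ k ∧ Nonempty ((G.induce (f ⁻¹' {i})) ≃g SimpleGraph.pathGraph k)}

/-- `G` contains a Hamiltonian path. -/
def HasHamiltonianPath [DecidableEq V] (G : SimpleGraph V) : Prop :=
  ∃ (u v : V) (p : G.Walk u v), p.IsHamiltonian

/-!
Index the spokes of `W_{1,n}` and its rim edges `b — b + 1` by `b : ZMod n`. All spokes together
with rim `0` form a zero forcing set: spoke `k + 1` sees every spoke and the rims `k`, `k + 1`, so
the rims are forced one after another around the cycle.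

Conversely, a zero forcing set meets every nonempty fort, a set in which no outside vertex has
exactly one neighbour. Among any `n` white vertices there is a fort: either two white spokes
`a ≠ a + δ` with all rims `a, …, a + δ - 1` between them white, or, when no such arc exists, the
whole white set. In the second case, sending each white spoke to the first black rim after it is
injective, and there are as many black rims as white spokes, so every black rim has a white
neighbour on each side.
-/

open Function

section ZeroForcing

variable {W : Type*} {G : SimpleGraph V} {H : SimpleGraph W} {S F : Set V}

lemma subset_zfStep (G : SimpleGraph V) (S : Set V) : S ⊆ zfStep G S :=
  Set.subset_union_left

lemma zfStep_mono (G : SimpleGraph V) : Monotone (zfStep G) := by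
  rintro S T hST v (hv | ⟨u, hu, huv, hforce⟩)
  · exact Or.inl (hST hv)
  · exact Or.inr ⟨u, hST hu, huv, fun w huw hwT => hforce w huw fun hwS => hwT (hST hwS)⟩

lemma subset_iterate_zfStep (G : SimpleGraph V) (S : Set V) (k : ℕ) :
    S ⊆ (zfStep G)^[k] S :=
  id_le_iterate_of_id_le (subset_zfStep G) k S

lemma IsZeroForcingSet.mono {T : Set V} (hS : IsZeroForcingSet G S) (hST : S ⊆ T) :
    IsZeroForcingSet G T := by
  obtain ⟨m, hm⟩ := hS
  exact ⟨m, Set.eq_univ_of_univ_subset (hm ▸ (zfStep_mono G).iterate m hST)⟩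

def IsFort (G : SimpleGraph V) (F : Set V) : Prop :=
  ∀ u ∉ F, ∀ v ∈ F, G.Adj u v → ∃ w ∈ F, w ≠ v ∧ G.Adj u w

lemma IsFort.of_forall_exists_pair
    (h : ∀ u ∉ F, (∃ v ∈ F, G.Adj u v) → ∃ x ∈ F, ∃ y ∈ F, x ≠ y ∧ G.Adj u x ∧ G.Adj u y) :
    IsFort G F := by
  intro u hu v hv huv
  obtain ⟨x, hx, y, hy, hxy, hux, huy⟩ := h u hu ⟨v, hv, huv⟩
  by_cases hxv : x = v
  · exact ⟨y, hy, hxv ▸ hxy.symm, huy⟩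
  · exact ⟨x, hx, hxv, hux⟩

lemma IsFort.disjoint_zfStep (hF : IsFort G F) (h : Disjoint S F) :
    Disjoint (zfStep G S) F := by
  rw [Set.disjoint_left] at h ⊢
  rintro v (hv | ⟨u, hu, huv, hforce⟩) hvF
  · exact h hv hvF
  · obtain ⟨w, hwF, hwv, huw⟩ := hF u (h hu) v hvF huv
    exact hwv (hforce w huw fun hwS => h hwS hwF)

lemma IsZeroForcingSet.inter_nonempty (hS : IsZeroForcingSet G S) (hF : IsFort G F)
    (hne : F.Nonempty) : (S ∩ F).Nonempty := by
  obtain ⟨m, hm⟩ := hS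
  rw [← Set.not_disjoint_iff_nonempty_inter]
  intro h
  have hdisj : ∀ k, Disjoint ((zfStep G)^[k] S) F := by
    intro k
    induction k with
    | zero => exact h
    | succ k ih => rw [iterate_succ_apply']; exact hF.disjoint_zfStep ih
  exact hne.ne_empty (Set.univ_disjoint.1 (hm ▸ hdisj m))

lemma SimpleGraph.Iso.image_zfStep_subset (e : G ≃g H) (S : Set V) :
    e '' zfStep G S ⊆ zfStep H (e '' S) := by
  rintro _ ⟨v, hv | ⟨u, hu, huv, hforce⟩, rfl⟩
  · exact Or.inl (Set.mem_image_of_mem e hv)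
  · refine Or.inr ⟨e u, Set.mem_image_of_mem e hu, e.map_adj_iff.2 huv, fun w huw hwS => ?_⟩
    rw [← e.apply_symm_apply w] at huw hwS ⊢
    exact congrArg e (hforce _ (e.map_adj_iff.1 huw) fun h => hwS (Set.mem_image_of_mem e h))

lemma SimpleGraph.Iso.isZeroForcingSet_image (e : G ≃g H) (hS : IsZeroForcingSet G S) :
    IsZeroForcingSet H (e '' S) := by
  obtain ⟨m, hm⟩ := hS
  have := (zfStep_mono H).le_iterate_comp_of_le (h := Set.image e) e.image_zfStep_subset m S
  refine ⟨m, Set.eq_univ_of_univ_subset ?_⟩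
  simpa [hm, Set.image_univ_of_surjective e.surjective] using this

lemma SimpleGraph.Iso.zeroForcingNum_eq (e : G ≃g H) : zeroForcingNum G = zeroForcingNum H := by
  unfold zeroForcingNum
  congr 1
  ext k
  constructor
  · rintro ⟨S, rfl, hS⟩
    exact ⟨e '' S, S.ncard_image_of_injective e.injective, e.isZeroForcingSet_image hS⟩
  · rintro ⟨S, rfl, hS⟩
    exact ⟨e.symm '' S, S.ncard_image_of_injective e.symm.injective,
      e.symm.isZeroForcingSet_image hS⟩

lemma zeroForcingNum_le_ncard (hS : IsZeroForcingSet G S) : zeroForcingNum G ≤ S.ncard :=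
  Nat.sInf_le ⟨S, rfl, hS⟩

lemma lt_zeroForcingNum_of_forall_exists_isFort {k : ℕ} (hk : k ≤ Nat.card V)
    (h : ∀ S : Set V, S.ncard = k → ∃ F ⊆ Sᶜ, F.Nonempty ∧ IsFort G F) :
    k < zeroForcingNum G := by
  obtain ⟨S, hcard, hS⟩ : ∃ S : Set V, S.ncard = zeroForcingNum G ∧ IsZeroForcingSet G S :=
    Nat.sInf_mem (s := {k | ∃ S : Set V, S.ncard = k ∧ IsZeroForcingSet G S})
      ⟨_, Set.univ, rfl, 0, rfl⟩
  by_contra! hle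
  obtain ⟨T, hST, -, hT⟩ := Set.exists_subsuperset_card_eq (Set.subset_univ S)
    (hcard.trans_le hle) (by rwa [Set.ncard_univ])
  obtain ⟨F, hFT, hne, hF⟩ := h T hT
  obtain ⟨v, hvT, hvF⟩ := (hS.mono hST).inter_nonempty hF hne
  exact hFT hvF hvT

end ZeroForcing

lemma Set.ncard_preimage_inl_add_ncard_preimage_inr {α β : Type*} [Finite α] [Finite β]
    (s : Set (α ⊕ β)) : (Sum.inl ⁻¹' s).ncard + (Sum.inr ⁻¹' s).ncard = s.ncard := by
  conv_rhs => rw [← Set.image_preimage_inl_union_image_preimage_inr s]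
  rw [Set.ncard_union_eq Set.disjoint_image_inl_image_inr,
    Set.ncard_image_of_injective _ Sum.inl_injective,
    Set.ncard_image_of_injective _ Sum.inr_injective]

section Cyclic

variable {n : ℕ}

lemma ZMod.natCast_ne_zero_of_pos_of_lt {k : ℕ} (h0 : 0 < k) (hk : k < n) :
    (k : ZMod n) ≠ 0 := by
  rw [Ne, ZMod.natCast_eq_zero_iff]
  exact Nat.not_dvd_of_pos_of_lt h0 hk

lemma ZMod.one_ne_zero_of_two_le (hn : 2 ≤ n) : (1 : ZMod n) ≠ 0 := by
  exact_mod_cast ZMod.natCast_ne_zero_of_pos_of_lt one_pos hn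

lemma ZMod.two_ne_zero_of_three_le (hn : 3 ≤ n) : (2 : ZMod n) ≠ 0 := by
  exact_mod_cast ZMod.natCast_ne_zero_of_pos_of_lt two_pos hn

lemma ZMod.add_one_ne_self (hn : 2 ≤ n) (a : ZMod n) : a + 1 ≠ a :=
  add_ne_left.2 (ZMod.one_ne_zero_of_two_le hn)

lemma ZMod.sub_one_ne_self (hn : 2 ≤ n) (a : ZMod n) : a - 1 ≠ a := by
  simpa using (ZMod.add_one_ne_self hn (a - 1)).symm

lemma ZMod.sub_one_ne_add_one (hn : 3 ≤ n) (a : ZMod n) : a - 1 ≠ a + 1 := fun h =>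
  ZMod.two_ne_zero_of_three_le hn (by linear_combination -h)

def HasArc (A B : Set (ZMod n)) : Prop :=
  ∃ a ∈ A, ∃ δ : ℕ, 0 < δ ∧ δ < n ∧ (∀ i < δ, a + i ∈ B) ∧ a + δ ∈ A

/-- The map sending `a ∈ A` to the first point `a + t` outside `B` is injective when there is
no arc, hence onto `Bᶜ` by counting. So `m = a + t`, and either `t = 0` or `m - 1 ∈ B`. -/
lemma mem_or_sub_one_mem_of_not_hasArc [NeZero n] {A B : Set (ZMod n)}
    (hcard : Bᶜ.ncard ≤ A.ncard) (harc : ¬ HasArc A B) {m : ZMod n} (hm : m ∉ B) :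
    m ∈ A ∨ m - 1 ∈ B := by
  classical
  have hex : ∀ a : ZMod n, ∃ t : ℕ, a + t ∉ B := fun a => ⟨(m - a).val, by simpa using hm⟩
  let exit a := Nat.find (hex a)
  have exit_lt a : exit a < n :=
    (Nat.find_min' (hex a) (show a + (m - a).val ∉ B by simpa using hm)).trans_lt
      (ZMod.val_lt _)
  have before_exit a : ∀ i < exit a, a + i ∈ B := fun i hi => not_not.1 (Nat.find_min _ hi)
  have hinj : Set.InjOn (fun a => a + exit a) A := by
    suffices h : ∀ a ∈ A, ∀ b ∈ A, a + exit a = b + exit b → ¬ exit b < exit a by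
      intro a ha b hb hab
      rcases lt_trichotomy (exit a) (exit b) with hlt | heq | hgt
      · exact (h b hb a ha hab.symm hlt).elim
      · simpa [heq] using hab
      · exact (h a ha b hb hab hgt).elim
    intro a ha b hb hab hlt
    refine harc ⟨a, ha, exit a - exit b, by omega, by have := exit_lt a; omega,
      fun i hi => before_exit a i (by omega), ?_⟩
    rw [Nat.cast_sub hlt.le]
    convert hb using 1
    linear_combination hab
  have himage : (fun a => a + exit a) '' A = Bᶜ :=
    Set.eq_of_subset_of_ncard_le (Set.image_subset_iff.2 fun a _ => Nat.find_spec (hex a))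
      (by rwa [hinj.ncard_image]) (Set.toFinite _)
  obtain ⟨a, ha, rfl⟩ : ∃ a ∈ A, a + exit a = m := by rw [← Set.mem_image, himage]; exact hm
  rcases h : exit a with _ | t
  · left
    simpa using ha
  · right
    convert before_exit a t (by omega) using 1
    push_cast
    ring

end Cyclic

section SpokeRim

variable {n : ℕ}

/-- The line graph of the wheel: `inl a` is the spoke from the hub to `a`, and `inr b` is the
rim edge from `b` to `b + 1`. -/
def spokeRimGraph (n : ℕ) : SimpleGraph (ZMod n ⊕ ZMod n) where
  Adj
    | .inl a, .inl b => a ≠ b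
    | .inl a, .inr b => a = b ∨ a = b + 1
    | .inr a, .inl b => b = a ∨ b = a + 1
    | .inr a, .inr b => a ≠ b ∧ (b = a + 1 ∨ a = b + 1)
  symm := ⟨by
    rintro (a | a) (b | b) h
    exacts [Ne.symm h, h, h, ⟨Ne.symm h.1, h.2.symm⟩]⟩
  loopless := ⟨by rintro (a | a) h <;> simp_all⟩

@[simp] lemma spokeRimGraph_adj_inl_inl {a b : ZMod n} :
    (spokeRimGraph n).Adj (.inl a) (.inl b) ↔ a ≠ b := Iff.rfl

@[simp] lemma spokeRimGraph_adj_inl_inr {a b : ZMod n} :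
    (spokeRimGraph n).Adj (.inl a) (.inr b) ↔ a = b ∨ a = b + 1 := Iff.rfl

@[simp] lemma spokeRimGraph_adj_inr_inl {a b : ZMod n} :
    (spokeRimGraph n).Adj (.inr a) (.inl b) ↔ b = a ∨ b = a + 1 := Iff.rfl

@[simp] lemma spokeRimGraph_adj_inr_inr {a b : ZMod n} :
    (spokeRimGraph n).Adj (.inr a) (.inr b) ↔ a ≠ b ∧ (b = a + 1 ∨ a = b + 1) := Iff.rfl

end SpokeRim

section WheelIso

variable {n : ℕ}

def zmodWheelGraph (n : ℕ) : SimpleGraph (Option (ZMod n)) :=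
  SimpleGraph.fromRel fun u v =>
    match u, v with
    | none, some _ => True
    | some a, some b => a + 1 = b
    | _, _ => False

def finEquivZMod (n : ℕ) [NeZero n] : Fin n ≃ ZMod n where
  toFun i := (i : ℕ)
  invFun z := ⟨z.val, z.val_lt⟩
  left_inv i := Fin.ext (ZMod.val_cast_of_lt i.isLt)
  right_inv := ZMod.natCast_zmod_val

lemma finEquivZMod_apply [NeZero n] (i : Fin n) : finEquivZMod n i = ((i : ℕ) : ZMod n) := rfl

def wheelGraphIsoZMod (n : ℕ) [NeZero n] : wheelGraph n ≃g zmodWheelGraph n where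
  toEquiv := Equiv.optionCongr (finEquivZMod n)
  map_rel_iff' := by
    rintro (_ | i) (_ | j) <;> simp [wheelGraph, zmodWheelGraph, ← finEquivZMod_apply]

def spokeRimEdge (hn : 2 ≤ n) : ZMod n ⊕ ZMod n → (zmodWheelGraph n).edgeSet
  | .inl a => ⟨s(none, some a), by simp [zmodWheelGraph]⟩
  | .inr b =>
    ⟨s(some b, some (b + 1)), by simp [zmodWheelGraph, ZMod.one_ne_zero_of_two_le hn]⟩

lemma spokeRimEdge_injective (hn : 3 ≤ n) : Injective (spokeRimEdge (n := n) (by omega)) := by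
  rintro (a | a) (b | b) h <;>
    simp only [spokeRimEdge, Subtype.ext_iff, Sym2.eq, Sym2.rel_iff', Prod.mk.injEq,
      Option.some.injEq, Prod.swap_prod_mk, reduceCtorEq, Sum.inl.injEq, Sum.inr.injEq,
      add_left_inj, true_and, false_and, and_false, and_self, or_false, or_self] at h ⊢
  · exact h
  · refine h.resolve_right fun ⟨hab, hba⟩ => ZMod.two_ne_zero_of_three_le hn ?_
    linear_combination hba - hab

lemma spokeRimEdge_surjective (hn : 3 ≤ n) : Surjective (spokeRimEdge (n := n) (by omega)) := by
  rintro ⟨e, he⟩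
  induction e using Sym2.ind with
  | _ u v =>
  rcases u with _ | a <;> rcases v with _ | b
  · simp at he
  · exact ⟨.inl b, rfl⟩
  · exact ⟨.inl a, Subtype.ext Sym2.eq_swap⟩
  · simp only [mem_edgeSet, zmodWheelGraph, fromRel_adj] at he
    rcases he.2 with rfl | rfl
    exacts [⟨.inr a, rfl⟩, ⟨.inr b, Subtype.ext Sym2.eq_swap⟩]

lemma lineGraph_adj_spokeRimEdge (hn : 3 ≤ n) (x y : ZMod n ⊕ ZMod n) :
    (zmodWheelGraph n).lineGraph.Adj (spokeRimEdge (by omega) x) (spokeRimEdge (by omega) y) ↔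
      (spokeRimGraph n).Adj x y := by
  rw [lineGraph_adj_iff_exists]
  rcases x with a | a <;> rcases y with b | b <;>
    simp only [spokeRimEdge, Subtype.ext_iff, Sym2.eq, Sym2.rel_iff', Sym2.mem_iff, Prod.mk.injEq,
      Option.some.injEq, Prod.swap_prod_mk, reduceCtorEq, add_left_inj, ne_eq, not_or, not_and,
      exists_eq_or_imp, existsAndEq, true_and, false_and, and_true, and_false, and_self, true_or,
      false_or, or_false, or_self, not_false_eq_true, spokeRimGraph_adj_inl_inl,
      spokeRimGraph_adj_inl_inr, spokeRimGraph_adj_inr_inl, spokeRimGraph_adj_inr_inr]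
  · exact or_congr eq_comm eq_comm
  · have h2 := ZMod.two_ne_zero_of_three_le hn
    constructor
    · rintro ⟨⟨hab, -⟩, h⟩
      exact ⟨hab, by tauto⟩
    · rintro ⟨hab, h⟩
      exact ⟨⟨hab, fun h1 h2' => h2 (by linear_combination h2' - h1)⟩, by tauto⟩

noncomputable def spokeRimIso (hn : 3 ≤ n) :
    spokeRimGraph n ≃g (zmodWheelGraph n).lineGraph where
  toEquiv := .ofBijective _ ⟨spokeRimEdge_injective hn, spokeRimEdge_surjective hn⟩
  map_rel_iff' := lineGraph_adj_spokeRimEdge hn _ _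

noncomputable def spokeRimIsoLineGraphWheel (hn : 3 ≤ n) :
    spokeRimGraph n ≃g (wheelGraph n).lineGraph :=
  have : NeZero n := ⟨by omega⟩
  (spokeRimIso hn).trans (wheelGraphIsoZMod n).symm.lineGraph

end WheelIso

section Forcing

variable {n : ℕ}

def spokesAndRimZero (n : ℕ) : Set (ZMod n ⊕ ZMod n) := insert (.inr 0) (Set.range .inl)

lemma ncard_spokesAndRimZero [NeZero n] : (spokesAndRimZero n).ncard = n + 1 := by
  rw [spokesAndRimZero, Set.ncard_insert_of_notMem (by simp), ← Set.image_univ,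
    Set.ncard_image_of_injective _ Sum.inl_injective, Set.ncard_univ, Nat.card_zmod]

/-- Spoke `k + 1` sees all spokes and the rims `k` and `k + 1`; once rim `k` is black it
forces rim `k + 1`. -/
lemma inr_natCast_mem_iterate_zfStep (k : ℕ) :
    .inr (k : ZMod n) ∈ (zfStep (spokeRimGraph n))^[k] (spokesAndRimZero n) := by
  have hspokes k j : .inl j ∈ (zfStep (spokeRimGraph n))^[k] (spokesAndRimZero n) :=
    subset_iterate_zfStep _ _ k (Set.mem_insert_of_mem _ ⟨j, rfl⟩)
  induction k with
  | zero => exact Set.mem_insert_iff.2 (by simp)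
  | succ k ih =>
    rw [iterate_succ_apply']
    refine Or.inr ⟨.inl ((k + 1 : ℕ) : ZMod n), hspokes k _, by simp, ?_⟩
    rintro (j | j) hadj hj
    · exact absurd (hspokes k j) hj
    · rcases hadj with h | h
      · rw [h]
      · push_cast at h
        exact absurd (add_right_cancel h ▸ ih) hj

lemma isZeroForcingSet_spokesAndRimZero [NeZero n] :
    IsZeroForcingSet (spokeRimGraph n) (spokesAndRimZero n) := by
  refine ⟨n, Set.eq_univ_of_forall ?_⟩
  rintro (a | b)
  · exact subset_iterate_zfStep _ _ n (Set.mem_insert_of_mem _ ⟨a, rfl⟩)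
  · rw [← ZMod.natCast_zmod_val b]
    exact monotone_iterate_of_id_le (subset_zfStep _) (ZMod.val_lt b).le _
      (inr_natCast_mem_iterate_zfStep b.val)

def arcFort (a : ZMod n) (δ : ℕ) : Set (ZMod n ⊕ ZMod n) :=
  {x | x.elim (fun k => k = a ∨ k = a + δ) (fun k => ∃ i < δ, k = a + i)}

lemma isFort_arcFort {a : ZMod n} {δ : ℕ} (hδ : 0 < δ) (hδn : δ < n) :
    IsFort (spokeRimGraph n) (arcFort a δ) := by
  have hends : a ≠ a + δ := (add_ne_left.2 (ZMod.natCast_ne_zero_of_pos_of_lt hδ hδn)).symm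
  have h1 : (1 : ZMod n) ≠ 0 := ZMod.one_ne_zero_of_two_le (by omega)
  refine IsFort.of_forall_exists_pair ?_
  rintro (k | k) hk ⟨v, hv, hkv⟩
  · simp only [arcFort, Set.mem_ofPred_eq, Sum.elim_inl, not_or] at hk
    exact ⟨.inl a, Or.inl rfl, .inl (a + δ), Or.inr rfl, by simpa using hends,
      by simpa using hk.1, by simpa using hk.2⟩
  · simp only [arcFort, Set.mem_ofPred_eq, Sum.elim_inr, not_exists, not_and] at hk
    have hcases : k + 1 = a ∨ k = a + δ := by
      rcases v with c | c
      · rcases hv with rfl | rfl <;> rcases hkv with h | h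
        · exact absurd (by simpa using h.symm) (hk 0 hδ)
        · exact Or.inl h.symm
        · exact Or.inr h.symm
        · refine absurd ?_ (hk (δ - 1) (by omega))
          rw [Nat.cast_sub hδ]
          linear_combination -h
      · obtain ⟨i, hi, rfl⟩ := hv
        rcases hkv.2 with h | h
        · rcases i with _ | i
          · exact Or.inl (by simpa using h.symm)
          · exact absurd (by push_cast at h; linear_combination -h) (hk i (by omega))
        · rcases Nat.lt_or_ge (i + 1) δ with hlt | hge
          · exact absurd (by push_cast; linear_combination h) (hk (i + 1) hlt)
          · exact Or.inr (by rw [h, show δ = i + 1 by omega]; push_cast; ring)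
    rcases hcases with rfl | rfl
    · exact ⟨.inl (k + 1), Or.inl rfl, .inr (k + 1), ⟨0, hδ, by simp⟩, by simp, by simp,
        by simp [h1]⟩
    · refine ⟨.inl (a + δ), Or.inr rfl, .inr (a + (δ - 1 : ℕ)), ⟨δ - 1, by omega, rfl⟩,
        by simp, by simp, ?_⟩
      rw [spokeRimGraph_adj_inr_inr, Nat.cast_sub hδ, Nat.cast_one]
      exact ⟨fun h => h1 (by linear_combination h), Or.inr (by ring)⟩

lemma exists_pair_adj_inl_of_ncard_le (hn : 3 ≤ n) {W : Set (ZMod n ⊕ ZMod n)}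
    (hcard : (Sum.inr ⁻¹' W)ᶜ.ncard ≤ (Sum.inl ⁻¹' W).ncard) {k : ZMod n} (hk : .inl k ∉ W) :
    ∃ x ∈ W, ∃ y ∈ W, x ≠ y ∧
      (spokeRimGraph n).Adj (.inl k) x ∧ (spokeRimGraph n).Adj (.inl k) y := by
  have : NeZero n := ⟨by omega⟩
  have hk0 := ZMod.sub_one_ne_self (by omega) k
  have hspoke a (ha : .inl a ∈ W) : (spokeRimGraph n).Adj (.inl k) (.inl a) := by
    rintro rfl
    exact hk ha
  have hA r (hr : .inr r ∉ W) : (Sum.inl ⁻¹' W).Nonempty := Set.nonempty_of_ncard_ne_zero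
    (((Set.ncard_pos (Set.toFinite _)).2 ⟨r, hr⟩).trans_le hcard).ne'
  by_cases h1 : .inr (k - 1) ∈ W <;> by_cases h2 : .inr k ∈ W
  · exact ⟨_, h1, _, h2, by simpa using hk0, by simp, by simp⟩
  · obtain ⟨a, ha⟩ := hA k h2
    exact ⟨_, ha, _, h1, by simp, hspoke a ha, by simp⟩
  · obtain ⟨a, ha⟩ := hA _ h1
    exact ⟨_, ha, _, h2, by simp, hspoke a ha, by simp⟩
  · obtain ⟨a, b, ha, hb, hab⟩ := (Set.one_lt_ncard_iff (Set.toFinite _)).1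
      (((Set.one_lt_ncard_iff (Set.toFinite _)).2 ⟨k - 1, k, h1, h2, hk0⟩).trans_le hcard)
    exact ⟨_, ha, _, hb, by simpa using hab, hspoke a ha, hspoke b hb⟩

lemma isFort_of_not_hasArc (hn : 3 ≤ n) {W : Set (ZMod n ⊕ ZMod n)}
    (hcard : (Sum.inr ⁻¹' W)ᶜ.ncard ≤ (Sum.inl ⁻¹' W).ncard)
    (hW : ¬ HasArc (Sum.inl ⁻¹' W) (Sum.inr ⁻¹' W)) : IsFort (spokeRimGraph n) W := by
  have : NeZero n := ⟨by omega⟩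
  refine IsFort.of_forall_exists_pair ?_
  rintro (k | k) hk -
  · exact exists_pair_adj_inl_of_ncard_le hn hcard hk
  · have hleft := mem_or_sub_one_mem_of_not_hasArc hcard hW hk
    have hright : .inl (k + 1) ∈ W ∨ .inr (k + 1) ∈ W := by
      by_contra! h
      simpa [hk] using (mem_or_sub_one_mem_of_not_hasArc hcard hW h.2).resolve_left h.1
    have hk1 := ZMod.add_one_ne_self (by omega) k
    have hk0 := ZMod.sub_one_ne_self (by omega) k
    have hk2 := ZMod.sub_one_ne_add_one hn k
    rcases hleft with hl | hl <;> rcases hright with hr | hr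
    · exact ⟨_, hl, _, hr, by simpa using hk1.symm, by simp, by simp⟩
    · exact ⟨_, hl, _, hr, by simp, by simp, by simp [hk1.symm]⟩
    · exact ⟨_, hl, _, hr, by simp, by simp [hk0.symm], by simp⟩
    · exact ⟨_, hl, _, hr, by simpa using hk2, by simp [hk0.symm], by simp [hk1.symm]⟩

lemma exists_isFort_subset_compl (hn : 3 ≤ n) {S : Set (ZMod n ⊕ ZMod n)}
    (hS : S.ncard = n) : ∃ F ⊆ Sᶜ, F.Nonempty ∧ IsFort (spokeRimGraph n) F := by
  have : NeZero n := ⟨by omega⟩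
  by_cases hArc : HasArc (Sum.inl ⁻¹' Sᶜ) (Sum.inr ⁻¹' Sᶜ)
  · obtain ⟨a, ha, δ, hδ, hδn, hB, hA⟩ := hArc
    refine ⟨arcFort a δ, ?_, ⟨.inl a, Or.inl rfl⟩, isFort_arcFort hδ hδn⟩
    rintro (k | k) hk
    · rcases hk with rfl | rfl
      exacts [ha, hA]
    · obtain ⟨i, hi, rfl⟩ := hk
      exact hB i hi
  · refine ⟨Sᶜ, subset_rfl, ?_, isFort_of_not_hasArc hn ?_ hArc⟩
    · refine Set.nonempty_of_ncard_ne_zero fun h => ?_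
      have := S.ncard_add_ncard_compl
      rw [Nat.card_sum, Nat.card_zmod] at this
      omega
    · have hsplit := S.ncard_preimage_inl_add_ncard_preimage_inr
      have hinl := (Sum.inl ⁻¹' S).ncard_add_ncard_compl
      rw [Nat.card_zmod] at hinl
      rw [Set.preimage_compl, Set.preimage_compl, compl_compl]
      omega

end Forcing

/-- For every integer `n ≥ 3`, `Z(L(W_{1,n})) = n + 1`. -/
theorem zeroForcingNum_lineGraph_wheelGraph (n : ℕ) (hn : 3 ≤ n) :
    zeroForcingNum (wheelGraph n).lineGraph = n + 1 := by
  have : NeZero n := ⟨by omega⟩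
  rw [← (spokeRimIsoLineGraphWheel hn).zeroForcingNum_eq]
  refine le_antisymm ?_ ?_
  · exact (zeroForcingNum_le_ncard isZeroForcingSet_spokesAndRimZero).trans_eq
      ncard_spokesAndRimZero
  · refine lt_zeroForcingNum_of_forall_exists_isFort ?_ fun _ => exists_isFort_subset_compl hn
    rw [Nat.card_sum, Nat.card_zmod]
    omega
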